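/- Let N ≥ 1. Among all 4^N Pauli strings O : Fin N → {I₂, X, Y, Z}, exactly 2^N satisfy Tr((⊗_j O_j) · |GHZ_N⟩⟨GHZ_N|) ≠ 0, namely the strings Z_S with S ⊆ Fin N of even cardinality (Z on S, I₂ elsewhere) and the strings W_T with T ⊆ Fin N of even cardinality (Y on T, X elsewhere); moreover, for every such string the expectation has absolute value 1: Tr(Z_S · |GHZ_N⟩⟨GHZ_N|) = 1 and Tr(W_T · |GHZ_N⟩⟨GHZ_N|) = (−1)^{|T|/2}. -/
import Mathlib


open Matrix BigOperators

noncomputable section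

/-- The Pauli matrices including the identity, indexed by `0 ↦ I₂`, `1 ↦ X`, `2 ↦ Y`, `3 ↦ Z`. -/
def pauli4 : Fin 4 → Matrix (Fin 2) (Fin 2) ℂ
  | 0 => 1
  | 1 => !![0, 1; 1, 0]
  | 2 => !![0, -Complex.I; Complex.I, 0]
  | 3 => !![1, 0; 0, -1]

/-- The outer product `|v⟩⟨v|`, with entries `v a * conj (v b)`. -/
def outer {n : Type*} (v : n → ℂ) : Matrix n n ℂ :=
  Matrix.of fun a b => v a * (starRingEnd ℂ) (v b)

/-- The tensor product `⊗_j A_j` of 2×2 matrices, as a matrix indexed by `Fin N → Fin 2`. -/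
def tensorProd {N : ℕ} (A : Fin N → Matrix (Fin 2) (Fin 2) ℂ) :
    Matrix (Fin N → Fin 2) (Fin N → Fin 2) ℂ :=
  Matrix.of fun x y => ∏ j, A j (x j) (y j)

/-- The N-qubit GHZ state vector: entry `1/√2` at the all-zeros string and at the all-ones
string, and `0` elsewhere. -/
def ghz (N : ℕ) : (Fin N → Fin 2) → ℂ :=
  fun x => if x = (fun _ => 0) ∨ x = (fun _ => 1) then 1 / (Real.sqrt 2 : ℂ) else 0

lemma fn01_ne {N : ℕ} (hN : 1 ≤ N) : ((fun _ => 0) : Fin N → Fin 2) ≠ (fun _ => 1) :=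
  fun h => absurd (congrFun h ⟨0, hN⟩) (by decide)

lemma sum_ghz_support {N : ℕ} (hN : 1 ≤ N) (f : (Fin N → Fin 2) → ℂ)
    (hf : ∀ x, x ≠ (fun _ => 0) → x ≠ (fun _ => 1) → f x = 0) :
    ∑ x, f x = f (fun _ => 0) + f (fun _ => 1) := by
  rw [← Finset.sum_subset (Finset.subset_univ {(fun _ => 0), (fun _ => 1)})
    (fun x _ hx => by
      simp only [Finset.mem_insert, Finset.mem_singleton, not_or] at hx
      exact hf x hx.1 hx.2),
    Finset.sum_pair (fn01_ne hN)]

lemma trace_tensor_outer {N : ℕ} (hN : 1 ≤ N) (A : Fin N → Matrix (Fin 2) (Fin 2) ℂ) :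
    Matrix.trace (tensorProd A * outer (ghz N)) =
      ((∏ j, A j 0 0) + (∏ j, A j 0 1) + (∏ j, A j 1 0) + (∏ j, A j 1 1)) / 2 := by
  have hconj : (starRingEnd ℂ) (1 / (Real.sqrt 2 : ℂ)) = 1 / (Real.sqrt 2 : ℂ) := by
    simp [map_div₀, Complex.conj_ofReal]
  have hhalf : (1 / (Real.sqrt 2 : ℂ)) * (1 / (Real.sqrt 2 : ℂ)) = 1 / 2 := by
    rw [div_mul_div_comm, one_mul, ← Complex.ofReal_mul,
      Real.mul_self_sqrt (by norm_num : (0:ℝ) ≤ 2)]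
    norm_num
  have hz : ghz N (fun _ => 0) = 1 / (Real.sqrt 2 : ℂ) := by simp [ghz]
  have ho : ghz N (fun _ => 1) = 1 / (Real.sqrt 2 : ℂ) := by simp [ghz]
  have step : ∀ x, (tensorProd A * outer (ghz N)) x x =
      ∑ y, (∏ j, A j (x j) (y j)) * (ghz N y * (starRingEnd ℂ) (ghz N x)) := by
    intro x; rw [Matrix.mul_apply]; rfl
  rw [Matrix.trace]
  simp only [Matrix.diag]
  rw [sum_ghz_support hN _ (fun x h0 h1 => by
    rw [step]
    simp [ghz, h0, h1]), step, step,
    sum_ghz_support hN _ (fun y h0 h1 => by simp [ghz, h0, h1]),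
    sum_ghz_support hN _ (fun y h0 h1 => by simp [ghz, h0, h1])]
  simp only [hz, ho, hconj]
  rw [hhalf]
  ring

lemma prod_ite_pow {N : ℕ} (S : Finset (Fin N)) (a : ℂ) :
    (∏ j, if j ∈ S then a else 1) = a ^ S.card := by
  rw [Finset.prod_ite, Finset.prod_const, Finset.prod_const, one_pow, mul_one,
    Finset.filter_mem_eq_inter, Finset.univ_inter]

lemma trace_allZ {N : ℕ} (hN : 1 ≤ N) (O : Fin N → Fin 4) (h : ∀ j, O j = 0 ∨ O j = 3) :
    Matrix.trace (tensorProd (fun j => pauli4 (O j)) * outer (ghz N)) =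
      (1 + (-1 : ℂ) ^ (Finset.univ.filter fun j => O j = 3).card) / 2 := by
  rw [trace_tensor_outer hN]
  have h00 : (∏ j, pauli4 (O j) 0 0) = 1 :=
    Finset.prod_eq_one fun j _ => by
      rcases h j with hj | hj <;> simp [hj, pauli4, Matrix.one_apply]
  have h01 : (∏ j, pauli4 (O j) 0 1) = 0 :=
    Finset.prod_eq_zero (Finset.mem_univ ⟨0, hN⟩) (by
      rcases h ⟨0, hN⟩ with hj | hj <;> simp [hj, pauli4, Matrix.one_apply])
  have h10 : (∏ j, pauli4 (O j) 1 0) = 0 :=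
    Finset.prod_eq_zero (Finset.mem_univ ⟨0, hN⟩) (by
      rcases h ⟨0, hN⟩ with hj | hj <;> simp [hj, pauli4, Matrix.one_apply])
  have h11 : (∏ j, pauli4 (O j) 1 1)
      = (-1 : ℂ) ^ (Finset.univ.filter fun j => O j = 3).card := by
    rw [← prod_ite_pow (Finset.univ.filter fun j => O j = 3) (-1 : ℂ)]
    refine Finset.prod_congr rfl fun j _ => ?_
    rcases h j with hj | hj <;> simp [hj, pauli4, Matrix.one_apply]
  rw [h00, h01, h10, h11]; ring

lemma trace_allX {N : ℕ} (hN : 1 ≤ N) (O : Fin N → Fin 4) (h : ∀ j, O j = 1 ∨ O j = 2) :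
    Matrix.trace (tensorProd (fun j => pauli4 (O j)) * outer (ghz N)) =
      ((-Complex.I) ^ (Finset.univ.filter fun j => O j = 2).card
        + Complex.I ^ (Finset.univ.filter fun j => O j = 2).card) / 2 := by
  rw [trace_tensor_outer hN]
  have h00 : (∏ j, pauli4 (O j) 0 0) = 0 :=
    Finset.prod_eq_zero (Finset.mem_univ ⟨0, hN⟩) (by
      rcases h ⟨0, hN⟩ with hj | hj <;> simp [hj, pauli4])
  have h11 : (∏ j, pauli4 (O j) 1 1) = 0 :=
    Finset.prod_eq_zero (Finset.mem_univ ⟨0, hN⟩) (by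
      rcases h ⟨0, hN⟩ with hj | hj <;> simp [hj, pauli4])
  have h01 : (∏ j, pauli4 (O j) 0 1)
      = (-Complex.I) ^ (Finset.univ.filter fun j => O j = 2).card := by
    rw [← prod_ite_pow (Finset.univ.filter fun j => O j = 2) (-Complex.I)]
    refine Finset.prod_congr rfl fun j _ => ?_
    rcases h j with hj | hj <;> simp [hj, pauli4]
  have h10 : (∏ j, pauli4 (O j) 1 0)
      = Complex.I ^ (Finset.univ.filter fun j => O j = 2).card := by
    rw [← prod_ite_pow (Finset.univ.filter fun j => O j = 2) Complex.I]
    refine Finset.prod_congr rfl fun j _ => ?_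
    rcases h j with hj | hj <;> simp [hj, pauli4]
  rw [h00, h01, h10, h11]; ring

lemma trace_mixed {N : ℕ} (hN : 1 ≤ N) (O : Fin N → Fin 4)
    (h1 : ∃ j, O j = 1 ∨ O j = 2) (h2 : ∃ j, O j = 0 ∨ O j = 3) :
    Matrix.trace (tensorProd (fun j => pauli4 (O j)) * outer (ghz N)) = 0 := by
  obtain ⟨j1, hj1⟩ := h1
  obtain ⟨j2, hj2⟩ := h2
  rw [trace_tensor_outer hN]
  have h00 : (∏ j, pauli4 (O j) 0 0) = 0 :=
    Finset.prod_eq_zero (Finset.mem_univ j1) (by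
      rcases hj1 with hj | hj <;> simp [hj, pauli4])
  have h11 : (∏ j, pauli4 (O j) 1 1) = 0 :=
    Finset.prod_eq_zero (Finset.mem_univ j1) (by
      rcases hj1 with hj | hj <;> simp [hj, pauli4])
  have h01 : (∏ j, pauli4 (O j) 0 1) = 0 :=
    Finset.prod_eq_zero (Finset.mem_univ j2) (by
      rcases hj2 with hj | hj <;> simp [hj, pauli4, Matrix.one_apply])
  have h10 : (∏ j, pauli4 (O j) 1 0) = 0 :=
    Finset.prod_eq_zero (Finset.mem_univ j2) (by
      rcases hj2 with hj | hj <;> simp [hj, pauli4, Matrix.one_apply])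
  rw [h00, h01, h10, h11]; ring

lemma even_half {k : ℕ} (h : Even k) : (1 + (-1 : ℂ) ^ k) / 2 = 1 := by
  rw [h.neg_one_pow]; norm_num

lemma odd_half {k : ℕ} (h : ¬ Even k) : (1 + (-1 : ℂ) ^ k) / 2 = 0 := by
  rw [(Nat.not_even_iff_odd.1 h).neg_one_pow]; norm_num

lemma I_half_even {k : ℕ} (h : Even k) :
    ((-Complex.I) ^ k + Complex.I ^ k) / 2 = (-1 : ℂ) ^ (k / 2) := by
  obtain ⟨m, hm⟩ := h
  subst hm
  have h2m : m + m = 2 * m := by ring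
  rw [h2m, pow_mul, pow_mul, neg_pow, Complex.I_sq]
  have h2 : (2 * m) / 2 = m := by omega
  rw [h2]
  ring

lemma I_half_odd {k : ℕ} (h : ¬ Even k) :
    ((-Complex.I) ^ k + Complex.I ^ k) / 2 = 0 := by
  rw [neg_pow, (Nat.not_even_iff_odd.1 h).neg_one_pow]
  ring

lemma fin4_cases : ∀ k : Fin 4, k = 0 ∨ k = 1 ∨ k = 2 ∨ k = 3 := by decide

lemma card_even_sets {N : ℕ} (hN : 1 ≤ N) :
    (Finset.univ.filter fun S : Finset (Fin N) => Even S.card).card * 2 = 2 ^ N := by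
  set j0 : Fin N := ⟨0, hN⟩ with hj0
  set tog : Finset (Fin N) → Finset (Fin N) :=
    fun S => if j0 ∈ S then S.erase j0 else insert j0 S with htog
  have hparity : ∀ S : Finset (Fin N), Even (tog S).card ↔ ¬ Even S.card := by
    intro S
    by_cases hm : j0 ∈ S
    · have := Finset.card_erase_add_one hm
      simp only [htog, if_pos hm]
      rw [← this, Nat.even_add_one, not_not]
    · simp only [htog, if_neg hm, Finset.card_insert_of_notMem hm, Nat.even_add_one]
  have hinv : ∀ S : Finset (Fin N), tog (tog S) = S := by
    intro S
    by_cases hm : j0 ∈ S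
    · simp only [htog, if_pos hm, if_neg (Finset.notMem_erase j0 S),
        Finset.insert_erase hm]
    · simp only [htog, if_neg hm, if_pos (Finset.mem_insert_self j0 S),
        Finset.erase_insert hm]
  have hbij : (Finset.univ.filter fun S : Finset (Fin N) => Even S.card).card
      = (Finset.univ.filter fun S : Finset (Fin N) => ¬ Even S.card).card := by
    refine Finset.card_bij' (fun S _ => tog S) (fun S _ => tog S) ?_ ?_ ?_ ?_
    · intro S hS
      simp only [Finset.mem_filter, Finset.mem_univ, true_and] at hS ⊢
      rw [hparity]; exact fun h => h hS
    · intro S hS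
      simp only [Finset.mem_filter, Finset.mem_univ, true_and] at hS ⊢
      exact (hparity S).2 hS
    · intro S _; exact hinv S
    · intro S _; exact hinv S
  have hsplit := Finset.card_filter_add_card_filter_not
    (s := (Finset.univ : Finset (Finset (Fin N))))
    (p := fun S => Even S.card)
  rw [Finset.card_univ, Fintype.card_finset, Fintype.card_fin] at hsplit
  omega

/-- Among all `4^N` Pauli strings `O : Fin N → {I₂,X,Y,Z}`, exactly `2^N` have nonzero GHZ
expectation `Tr((⊗_j O_j)·|GHZ_N⟩⟨GHZ_N|)`, namely the strings `Z_S` (Z on `S`, I₂ elsewhere)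
and `W_T` (Y on `T`, X elsewhere) for `S`, `T` of even cardinality; moreover
`Tr(Z_S·|GHZ_N⟩⟨GHZ_N|) = 1` and `Tr(W_T·|GHZ_N⟩⟨GHZ_N|) = (−1)^{|T|/2}`. -/
theorem ghz_pauli_support {N : ℕ} (hN : 1 ≤ N) :
    Set.ncard {O : Fin N → Fin 4 |
      Matrix.trace (tensorProd (fun j => pauli4 (O j)) * outer (ghz N)) ≠ 0} = 2 ^ N ∧
    (∀ O : Fin N → Fin 4,
      Matrix.trace (tensorProd (fun j => pauli4 (O j)) * outer (ghz N)) ≠ 0 ↔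
      ((∃ S : Finset (Fin N), Even S.card ∧ O = fun j => if j ∈ S then 3 else 0) ∨
       (∃ T : Finset (Fin N), Even T.card ∧ O = fun j => if j ∈ T then 2 else 1))) ∧
    (∀ S : Finset (Fin N), Even S.card →
      Matrix.trace
        (tensorProd (fun j => if j ∈ S then pauli4 3 else pauli4 0) * outer (ghz N)) = 1) ∧
    (∀ T : Finset (Fin N), Even T.card →
      Matrix.trace
        (tensorProd (fun j => if j ∈ T then pauli4 2 else pauli4 1) * outer (ghz N)) =
        (-1 : ℂ) ^ (T.card / 2)) := by
  classical
  have part3 : ∀ S : Finset (Fin N), Even S.card →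
      Matrix.trace
        (tensorProd (fun j => if j ∈ S then pauli4 3 else pauli4 0) * outer (ghz N)) = 1 := by
    intro S hS
    have hO : (fun j => if j ∈ S then pauli4 3 else pauli4 0)
        = fun j => pauli4 (if j ∈ S then 3 else 0) := by
      funext j; rw [apply_ite pauli4]
    rw [hO, trace_allZ hN _ (fun j => by by_cases h : j ∈ S <;> simp [h])]
    have hfilter : (Finset.univ.filter
        fun j => (if j ∈ S then (3 : Fin 4) else 0) = 3) = S := by
      ext a; by_cases h : a ∈ S <;> simp [h]
    rw [hfilter]; exact even_half hS
  have part4 : ∀ T : Finset (Fin N), Even T.card →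
      Matrix.trace
        (tensorProd (fun j => if j ∈ T then pauli4 2 else pauli4 1) * outer (ghz N)) =
        (-1 : ℂ) ^ (T.card / 2) := by
    intro T hT
    have hO : (fun j => if j ∈ T then pauli4 2 else pauli4 1)
        = fun j => pauli4 (if j ∈ T then 2 else 1) := by
      funext j; rw [apply_ite pauli4]
    rw [hO, trace_allX hN _ (fun j => by by_cases h : j ∈ T <;> simp [h])]
    have hfilter : (Finset.univ.filter
        fun j => (if j ∈ T then (2 : Fin 4) else 1) = 2) = T := by
      ext a; by_cases h : a ∈ T <;> simp [h]
    rw [hfilter]; exact I_half_even hT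
  have part2 : ∀ O : Fin N → Fin 4,
      Matrix.trace (tensorProd (fun j => pauli4 (O j)) * outer (ghz N)) ≠ 0 ↔
      ((∃ S : Finset (Fin N), Even S.card ∧ O = fun j => if j ∈ S then 3 else 0) ∨
       (∃ T : Finset (Fin N), Even T.card ∧ O = fun j => if j ∈ T then 2 else 1)) := by
    intro O
    constructor
    · intro hne
      by_cases hA : ∀ j, O j = 0 ∨ O j = 3
      · left
        refine ⟨Finset.univ.filter fun j => O j = 3, ?_, ?_⟩
        · by_contra hodd
          exact hne (by rw [trace_allZ hN O hA, odd_half hodd])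
        · funext j
          rcases hA j with h | h <;> simp [h]
      · by_cases hB : ∀ j, O j = 1 ∨ O j = 2
        · right
          refine ⟨Finset.univ.filter fun j => O j = 2, ?_, ?_⟩
          · by_contra hodd
            exact hne (by rw [trace_allX hN O hB, I_half_odd hodd])
          · funext j
            rcases hB j with h | h <;> simp [h]
        · exfalso
          push_neg at hA hB
          obtain ⟨j1, h1a, h1b⟩ := hA
          obtain ⟨j2, h2a, h2b⟩ := hB
          refine hne (trace_mixed hN O ⟨j1, ?_⟩ ⟨j2, ?_⟩)
          · rcases fin4_cases (O j1) with h | h | h | h <;> simp_all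
          · rcases fin4_cases (O j2) with h | h | h | h <;> simp_all
    · rintro (⟨S, hS, rfl⟩ | ⟨T, hT, rfl⟩)
      · have hO : (fun j => pauli4 (if j ∈ S then 3 else 0))
            = fun j => if j ∈ S then pauli4 3 else pauli4 0 := by
          funext j; rw [apply_ite pauli4]
        rw [hO, part3 S hS]; exact one_ne_zero
      · have hO : (fun j => pauli4 (if j ∈ T then 2 else 1))
            = fun j => if j ∈ T then pauli4 2 else pauli4 1 := by
          funext j; rw [apply_ite pauli4]
        rw [hO, part4 T hT]
        exact pow_ne_zero _ (by norm_num)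
  refine ⟨?_, part2, part3, part4⟩
  set E := Finset.univ.filter fun S : Finset (Fin N) => Even S.card with hE
  set zf : Finset (Fin N) → (Fin N → Fin 4) :=
    fun S j => if j ∈ S then 3 else 0 with hzf
  set wf : Finset (Fin N) → (Fin N → Fin 4) :=
    fun T j => if j ∈ T then 2 else 1 with hwf
  have hset : {O : Fin N → Fin 4 |
      Matrix.trace (tensorProd (fun j => pauli4 (O j)) * outer (ghz N)) ≠ 0}
      = ↑(E.image zf ∪ E.image wf) := by
    ext O
    simp only [Set.mem_setOf_eq, part2 O, Finset.coe_union, Set.mem_union,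
      Finset.coe_image, Set.mem_image, Finset.mem_coe, hE, Finset.mem_filter,
      Finset.mem_univ, true_and]
    constructor
    · rintro (⟨S, hS, rfl⟩ | ⟨T, hT, rfl⟩)
      · exact Or.inl ⟨S, hS, rfl⟩
      · exact Or.inr ⟨T, hT, rfl⟩
    · rintro (⟨S, hS, rfl⟩ | ⟨T, hT, rfl⟩)
      · exact Or.inl ⟨S, hS, rfl⟩
      · exact Or.inr ⟨T, hT, rfl⟩
  have hinj_z : Set.InjOn zf ↑E := by
    intro S _ S' _ h
    ext a
    have ha := congrFun h a
    by_cases h1 : a ∈ S <;> by_cases h2 : a ∈ S' <;>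
      simp [hzf, h1, h2] at ha ⊢
  have hinj_w : Set.InjOn wf ↑E := by
    intro S _ S' _ h
    ext a
    have ha := congrFun h a
    by_cases h1 : a ∈ S <;> by_cases h2 : a ∈ S' <;>
      simp [hwf, h1, h2] at ha ⊢
  have hdisj : Disjoint (E.image zf) (E.image wf) := by
    rw [Finset.disjoint_left]
    rintro a ha hb
    obtain ⟨S, _, rfl⟩ := Finset.mem_image.1 ha
    obtain ⟨T, _, hT⟩ := Finset.mem_image.1 hb
    have key := congrFun hT ⟨0, hN⟩
    by_cases h1 : (⟨0, hN⟩ : Fin N) ∈ T <;> by_cases h2 : (⟨0, hN⟩ : Fin N) ∈ S <;>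
      simp [hzf, hwf, h1, h2] at key
  rw [hset, Set.ncard_coe_finset, Finset.card_union_of_disjoint hdisj,
    Finset.card_image_of_injOn hinj_z, Finset.card_image_of_injOn hinj_w]
  have hc := card_even_sets (N := N) hN
  rw [← hE] at hc
  omega
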